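/- Let n ≥ 1 and t > 0, and define the (complexified) unwrapped heat kernel ν_t on ℂ ∖ πℤ by ν_t(z) = e^{t n²/2}·(L̃^n G_t)(z), where G_t(z) = e^{−z²/(2t)}/√(2πt) and (L̃g)(z) = −(1/(2π))·g′(z)/sin z. Then: (a) ν_t has a removable singularity at z = 0, i.e., it extends to a holomorphic function on ℂ ∖ { kπ : k ∈ ℤ, k ≠ 0 }; and (b) for every nonzero integer k, ν_t has a pole of order exactly 2n − 1 at kπ, i.e., the function z ↦ (z − kπ)^{2n−1}·ν_t(z) extends holomorphically to a neighborhood of kπ with nonzero value at kπ. -/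

import Mathlib

/-- The operator `L̃` acting on functions of a complex variable:
`(L̃ g)(z) = -(1/(2π)) g'(z)/sin z`. -/
noncomputable def LsphC (g : ℂ → ℂ) : ℂ → ℂ :=
  fun z => -(1 / (2 * (Real.pi : ℂ))) * deriv g z / Complex.sin z

/-- The complexified unwrapped heat kernel of `S^{2n+1}`:
`ν_t(z) = e^{tn²/2} (L̃ⁿ G_t)(z)` with `G_t(z) = e^{-z²/(2t)}/√(2πt)`. -/
noncomputable def nuC (n : ℕ) (t : ℝ) : ℂ → ℂ :=
  fun z => (Real.exp (t * (n : ℝ) ^ 2 / 2) : ℂ) *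
    LsphC^[n] (fun w => Complex.exp (-(w ^ 2) / (2 * (t : ℂ)))
      / (Real.sqrt (2 * Real.pi * t) : ℂ)) z


/-!
Each application of `L̃` differentiates and divides by `sin z`. Near a zero `a = kπ` of `sin`,
write `L̃ⁿ G = fₙ / sin^(2n-1)` with `fₙ` entire; one more step gives
`fₙ₊₁ = -(fₙ' sin - (2n-1) fₙ cos) / (2π)`, so `fₙ₊₁(a)` is a nonzero multiple of `fₙ(a)`
because `cos a ≠ 0`, while `f₁ = -G'/(2π)` vanishes among the `kπ` only at `0`.
At `0` there is no pole at all: `G` is even and `L̃` preserves evenness, and the derivative of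
an even function analytic at `0` vanishes there, so dividing it by `sin z` leaves it analytic.
-/

open Complex Filter Function
open scoped Topology

noncomputable def heatGaussian (t : ℝ) : ℂ → ℂ :=
  fun w => exp (-(w ^ 2) / (2 * (t : ℂ))) / (Real.sqrt (2 * Real.pi * t) : ℂ)

lemma nuC_apply (n : ℕ) (t : ℝ) (z : ℂ) :
    nuC n t z = (Real.exp (t * (n : ℝ) ^ 2 / 2) : ℂ) * LsphC^[n] (heatGaussian t) z :=
  rfl

lemma hasDerivAt_heatGaussian {t : ℝ} (ht : t ≠ 0) (z : ℂ) :
    HasDerivAt (heatGaussian t) (-(z / t) * heatGaussian t z) z := by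
  have ht' : (t : ℂ) ≠ 0 := by exact_mod_cast ht
  have h : HasDerivAt (fun w : ℂ => -(w ^ 2) / (2 * (t : ℂ))) (-(z / t)) z :=
    ((hasDerivAt_pow 2 z).fun_neg.div_const (2 * (t : ℂ))).congr_deriv (by field_simp; ring)
  exact (h.cexp.div_const (Real.sqrt (2 * Real.pi * t) : ℂ)).congr_deriv
    (by simp only [heatGaussian]; ring)

lemma heatGaussian_ne_zero {t : ℝ} (ht : 0 < t) (z : ℂ) : heatGaussian t z ≠ 0 := by
  have : (0 : ℝ) < Real.sqrt (2 * Real.pi * t) := Real.sqrt_pos.mpr (by positivity)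
  exact div_ne_zero (exp_ne_zero _) (by exact_mod_cast this.ne')

lemma differentiable_heatGaussian {t : ℝ} (ht : t ≠ 0) : Differentiable ℂ (heatGaussian t) :=
  fun z => (hasDerivAt_heatGaussian ht z).differentiableAt

lemma deriv_heatGaussian_ne_zero {t : ℝ} (ht : 0 < t) {z : ℂ} (hz : z ≠ 0) :
    deriv (heatGaussian t) z ≠ 0 := by
  rw [(hasDerivAt_heatGaussian ht.ne' z).deriv]
  exact mul_ne_zero (neg_ne_zero.mpr (div_ne_zero hz (ofReal_ne_zero.mpr ht.ne')))
    (heatGaussian_ne_zero ht z)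

lemma heatGaussian_even (t : ℝ) : (heatGaussian t).Even := by
  intro z
  simp only [heatGaussian, neg_sq]

lemma Function.Even.update_zero {α β : Type*} [AddGroup α] [DecidableEq α] {g : α → β}
    (hg : g.Even) (c : β) : (update g 0 c).Even := by
  intro z
  rcases eq_or_ne z 0 with rfl | hz
  · rw [neg_zero]
  · rw [update_of_ne (neg_ne_zero.mpr hz), update_of_ne hz, hg]

lemma Complex.cos_ne_zero_of_sin_eq_zero {a : ℂ} (ha : sin a = 0) : cos a ≠ 0 := fun hc => by
  simpa [ha, hc] using sin_sq_add_cos_sq a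

lemma Complex.sin_ne_zero_of_ne_int_mul_pi {z : ℂ} (hz : ∀ k : ℤ, k ≠ 0 → z ≠ k * Real.pi)
    (hz0 : z ≠ 0) : sin z ≠ 0 := by
  rw [Ne, sin_eq_zero_iff, not_exists]
  intro k hk
  rcases eq_or_ne k 0 with rfl | hk0
  · exact hz0 (by simpa using hk)
  · exact hz k hk0 hk

section

variable {𝕜 E : Type*} [NontriviallyNormedField 𝕜] [NormedAddCommGroup E] [NormedSpace 𝕜 E]

lemma Function.Even.odd_deriv {g : 𝕜 → E} (hg : g.Even) : (deriv g).Odd := by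
  intro z
  have h : (fun x => g (-x)) = g := funext hg
  rw [← neg_neg (deriv g (-z)), ← deriv_comp_neg, h]

lemma AnalyticAt.dslope {f : 𝕜 → E} {a : 𝕜} (hf : AnalyticAt 𝕜 f a) :
    AnalyticAt 𝕜 (dslope f a) a := by
  obtain ⟨p, hp⟩ := hf
  exact ⟨p.fslope, hp.has_fpower_series_dslope_fslope⟩

end

lemma even_LsphC {g : ℂ → ℂ} (hg : g.Even) : (LsphC g).Even := by
  intro z
  simp only [LsphC, hg.odd_deriv z, sin_neg, neg_div_neg_eq, mul_neg]

lemma even_iterate_LsphC {g : ℂ → ℂ} (hg : g.Even) (n : ℕ) : (LsphC^[n] g).Even := by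
  induction n with
  | zero => exact hg
  | succ n ih => rw [iterate_succ_apply']; exact even_LsphC ih

lemma Filter.EventuallyEq.nhdsNE_LsphC {g h : ℂ → ℂ} {a : ℂ} (hgh : g =ᶠ[𝓝[≠] a] h) :
    LsphC g =ᶠ[𝓝[≠] a] LsphC h := by
  filter_upwards [hgh.nhdsNE_deriv] with z hz
  simp only [LsphC, hz]

lemma analyticOnNhd_LsphC {g : ℂ → ℂ} {s : Set ℂ} (hg : AnalyticOnNhd ℂ g s)
    (hs : ∀ z ∈ s, sin z ≠ 0) : AnalyticOnNhd ℂ (LsphC g) s := fun z hz =>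
  (analyticAt_const.mul (hg.deriv z hz)).div analyticAt_sin (hs z hz)

lemma analyticOnNhd_iterate_LsphC {g : ℂ → ℂ} (hg : Differentiable ℂ g) (n : ℕ) :
    AnalyticOnNhd ℂ (LsphC^[n] g) {z | sin z ≠ 0} := by
  induction n with
  | zero => exact fun z _ => hg.analyticAt z
  | succ n ih => rw [iterate_succ']; exact analyticOnNhd_LsphC ih fun _ hz => hz

lemma exists_analyticAt_update_LsphC {g : ℂ → ℂ} (hg : g.Even) {c : ℂ}
    (hgc : AnalyticAt ℂ (update g 0 c) 0) :
    ∃ c', AnalyticAt ℂ (update (LsphC g) 0 c') 0 := by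
  set φ := update g 0 c
  have hφ0 : deriv φ 0 = 0 := (hg.update_zero c).odd_deriv.map_zero
  set F : ℂ → ℂ := fun z =>
    -(1 / (2 * (Real.pi : ℂ))) * dslope (deriv φ) 0 z / dslope sin 0 z
  have hF : AnalyticAt ℂ F 0 :=
    (analyticAt_const.mul hgc.deriv.dslope).div analyticAt_sin.dslope (by simp [dslope_same])
  refine ⟨F 0, hF.congr (eventuallyEq_nhds_of_eventuallyEq_nhdsNE ?_ (by simp)).symm⟩
  have hgφ : g =ᶠ[𝓝[≠] 0] φ := (update_eventuallyEq_nhdsNE g 0 0 c).symm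
  filter_upwards [update_eventuallyEq_nhdsNE (LsphC g) 0 0 (F 0), hgφ.nhdsNE_LsphC,
    self_mem_nhdsWithin] with z h1 h2 (hz : z ≠ 0)
  rw [h1, h2]
  simp only [F, LsphC, dslope_of_ne _ hz, slope_def_field, hφ0, sin_zero, sub_zero,
    div_div_div_cancel_right₀ hz, mul_div_assoc]

lemma exists_analyticAt_update_iterate_LsphC {g : ℂ → ℂ} (hg : g.Even) (hg0 : AnalyticAt ℂ g 0)
    (n : ℕ) : ∃ c, AnalyticAt ℂ (update (LsphC^[n] g) 0 c) 0 := by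
  induction n with
  | zero => exact ⟨g 0, by rwa [iterate_zero, id, update_eq_self]⟩
  | succ n ih =>
    obtain ⟨c, hc⟩ := ih
    rw [iterate_succ_apply']
    exact exists_analyticAt_update_LsphC (even_iterate_LsphC hg n) hc

lemma LsphC_eq_div_sin_pow_add_two {g f : ℂ → ℂ} {m : ℕ} (hf : Differentiable ℂ f)
    (hg : ∀ z, sin z ≠ 0 → g z = f z / sin z ^ m) {z : ℂ} (hz : sin z ≠ 0) :
    LsphC g z = -(1 / (2 * (Real.pi : ℂ))) * (deriv f z * sin z - m * f z * cos z) /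
      sin z ^ (m + 2) := by
  have hgz : g =ᶠ[𝓝 z] fun w => f w / sin w ^ m := by
    filter_upwards [(isOpen_ne_fun continuous_sin continuous_const).mem_nhds hz] with w hw
    exact hg w hw
  have hderiv := ((hf z).hasDerivAt.fun_div ((hasDerivAt_sin z).fun_pow m) (pow_ne_zero m hz)).deriv
  have hpow : (m : ℂ) * sin z ^ (m - 1) * sin z = m * sin z ^ m := by
    cases m <;> simp [pow_succ, mul_assoc]
  have hπ : (Real.pi : ℂ) ≠ 0 := by exact_mod_cast Real.pi_ne_zero
  rw [LsphC, hgz.deriv_eq, hderiv]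
  field_simp
  linear_combination (f z * cos z * sin z ^ (m + 1)) * hpow

lemma exists_iterate_LsphC_eq_div_sin_pow {g : ℂ → ℂ} (hg : Differentiable ℂ g) {n : ℕ}
    (hn : 1 ≤ n) :
    ∃ f : ℂ → ℂ, Differentiable ℂ f ∧ (∀ a, sin a = 0 → deriv g a ≠ 0 → f a ≠ 0) ∧
      ∀ z, sin z ≠ 0 → LsphC^[n] g z = f z / sin z ^ (2 * n - 1) := by
  have hπ : (Real.pi : ℂ) ≠ 0 := by exact_mod_cast Real.pi_ne_zero
  induction n, hn using Nat.le_induction with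
  | base =>
    refine ⟨fun z => -(1 / (2 * (Real.pi : ℂ))) * deriv g z, hg.deriv.const_mul _,
      fun a _ ha => by simpa [hπ] using ha, fun z _ => by simp [LsphC]⟩
  | succ n hn ih =>
    obtain ⟨f, hf, hf0, hfg⟩ := ih
    refine ⟨fun z => -(1 / (2 * (Real.pi : ℂ))) *
      (deriv f z * sin z - ((2 * n - 1 : ℕ) : ℂ) * f z * cos z), ?_, ?_, ?_⟩
    · exact ((hf.deriv.mul differentiable_sin).sub
        ((hf.const_mul _).mul differentiable_cos)).const_mul _
    · intro a ha hga
      have hm : ((2 * n - 1 : ℕ) : ℂ) ≠ 0 := by exact_mod_cast (by omega : 2 * n - 1 ≠ 0)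
      simpa [ha, hπ, hm, cos_ne_zero_of_sin_eq_zero ha] using hf0 a ha hga
    · intro z hz
      rw [iterate_succ_apply', LsphC_eq_div_sin_pow_add_two hf hfg hz,
        show 2 * (n + 1) - 1 = 2 * n - 1 + 2 by omega, mul_div_assoc]

lemma exists_analyticAt_eq_sub_pow_mul_of_eq_div_sin_pow {g f : ℂ → ℂ} {m : ℕ} {a : ℂ}
    (hf : AnalyticAt ℂ f a) (hfa : f a ≠ 0) (ha : sin a = 0)
    (hg : ∀ z, sin z ≠ 0 → g z = f z / sin z ^ m) :
    ∃ G : ℂ → ℂ, AnalyticAt ℂ G a ∧ G a ≠ 0 ∧ ∀ᶠ z in 𝓝[≠] a, G z = (z - a) ^ m * g z := by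
  have hsa : dslope sin a a ≠ 0 := by
    rw [dslope_same, Complex.deriv_sin]
    exact cos_ne_zero_of_sin_eq_zero ha
  refine ⟨fun z => f z / dslope sin a z ^ m, hf.div (analyticAt_sin.dslope.pow m)
    (pow_ne_zero m hsa), div_ne_zero hfa (pow_ne_zero m hsa), ?_⟩
  filter_upwards [analyticAt_sin.dslope.continuousAt.eventually_ne hsa |>.filter_mono
    nhdsWithin_le_nhds, self_mem_nhdsWithin] with z hz (hza : z ≠ a)
  have hsin : sin z = (z - a) * dslope sin a z := by
    rw [← smul_eq_mul, sub_smul_dslope, ha, sub_zero]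
  have hza' : z - a ≠ 0 := sub_ne_zero.mpr hza
  rw [hg z (by rw [hsin]; exact mul_ne_zero hza' hz), hsin, mul_pow]
  field_simp

/-- The unwrapped heat kernel has a removable singularity at `0` and a pole of
order exactly `2n - 1` at each nonzero integer multiple of `π`. -/
theorem stmt_18 (n : ℕ) (hn : 1 ≤ n) (t : ℝ) (ht : 0 < t) :
    (∃ h : ℂ → ℂ,
      (∀ z : ℂ, (∀ k : ℤ, k ≠ 0 → z ≠ (k : ℂ) * (Real.pi : ℂ)) → DifferentiableAt ℂ h z) ∧
      (∀ z : ℂ, (∀ k : ℤ, z ≠ (k : ℂ) * (Real.pi : ℂ)) → h z = nuC n t z)) ∧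
    (∀ k : ℤ, k ≠ 0 → ∃ g : ℂ → ℂ,
      AnalyticAt ℂ g ((k : ℂ) * (Real.pi : ℂ)) ∧
      g ((k : ℂ) * (Real.pi : ℂ)) ≠ 0 ∧
      ∀ᶠ z in nhdsWithin ((k : ℂ) * (Real.pi : ℂ)) {((k : ℂ) * (Real.pi : ℂ))}ᶜ,
        g z = (z - (k : ℂ) * (Real.pi : ℂ)) ^ (2 * n - 1) * nuC n t z) := by
  set E : ℂ := (Real.exp (t * (n : ℝ) ^ 2 / 2) : ℂ)
  have hE : E ≠ 0 := ofReal_ne_zero.mpr (Real.exp_ne_zero _)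
  have hG := differentiable_heatGaussian ht.ne'
  obtain ⟨c, hc⟩ :=
    exists_analyticAt_update_iterate_LsphC (heatGaussian_even t) (hG.analyticAt 0) n
  obtain ⟨f, hf, hf0, hfν⟩ := exists_iterate_LsphC_eq_div_sin_pow hG hn
  constructor
  · refine ⟨fun z => E * update (LsphC^[n] (heatGaussian t)) 0 c z, fun z hz => ?_,
      fun z hz => by dsimp only; rw [update_of_ne (by simpa using hz 0)]; rfl⟩
    rcases eq_or_ne z 0 with rfl | hz0
    · exact hc.differentiableAt.const_mul E
    · refine ((analyticOnNhd_iterate_LsphC hG n z (sin_ne_zero_of_ne_int_mul_pi hz hz0)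
        ).differentiableAt.const_mul E).congr_of_eventuallyEq ?_
      filter_upwards [eventually_ne_nhds hz0] with w hw
      rw [update_of_ne hw]
  · intro k hk
    have hsin : sin (k * Real.pi) = 0 := sin_eq_zero_iff.mpr ⟨k, rfl⟩
    have hderiv : deriv (heatGaussian t) (k * Real.pi) ≠ 0 :=
      deriv_heatGaussian_ne_zero ht
        (mul_ne_zero (by exact_mod_cast hk) (ofReal_ne_zero.mpr Real.pi_ne_zero))
    exact exists_analyticAt_eq_sub_pow_mul_of_eq_div_sin_pow ((hf.const_mul E).analyticAt _)
      (mul_ne_zero hE (hf0 _ hsin hderiv)) hsin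
      fun z hz => by rw [nuC_apply, hfν z hz]; exact (mul_div_assoc _ _ _).symm
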